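/- arXiv:2602.00166 — 2 statements merged into one kernel-verified Lean document; each statement's English description precedes it below -/
import Mathlib

section
/- Let Y be a finite type, E a real normed vector space, and π : E → Y → ℝ a parameterized probability mass function with π θ y > 0 and ∑_{y ∈ Y} π θ y = 1 for every θ, such that each θ ↦ π θ y is differentiable at θ₀. Let r : Y → ℝ and let G ≥ 1. Taking expectation over G i.i.d. samples s : Fin G → Y with weight ∏_{i} π θ₀ (s i), the group-mean-baseline term satisfies ∑_{s : Fin G → Y} (∏_{i} π θ₀ (s i)) • ∑_{i} ((1/G) ∑_{g} r (s g)) • D(θ ↦ log (π θ (s i)))(θ₀) = D(θ ↦ ∑_{y ∈ Y} (π θ y) * (r y))(θ₀). -/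
open Finset

private lemma sum_prod_swap {Y : Type*} [Fintype Y] {G : ℕ}
    (w : Fin G → Y → ℝ) :
    ∑ s : Fin G → Y, ∏ j, w j (s j) = ∏ j, ∑ y, w j y := by
  rw [Finset.prod_univ_sum, Fintype.piFinset_univ]

private lemma key_pair {Y : Type*} [Fintype Y] {G : ℕ}
    (p f h : Y → ℝ) (i g : Fin G) :
    ∑ s : Fin G → Y, (∏ j, p (s j)) * (f (s i) * h (s g))
      = ∏ j, ∑ y, p y * ((if j = i then f y else 1) * (if j = g then h y else 1)) := by
  rw [← sum_prod_swap]
  refine Finset.sum_congr rfl fun s _ => ?_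
  rw [Finset.prod_mul_distrib, Finset.prod_mul_distrib, Finset.prod_ite_eq',
    Finset.prod_ite_eq']
  simp [mul_assoc]

private lemma prod_eval {Y : Type*} [Fintype Y] {G : ℕ}
    (p f h : Y → ℝ) (hp : ∑ y, p y = 1) (i g : Fin G) :
    (∏ j, ∑ y, p y * ((if j = i then f y else 1) * (if j = g then h y else 1)))
      = if i = g then ∑ y, p y * (f y * h y)
        else (∑ y, p y * f y) * (∑ y, p y * h y) := by
  by_cases hig : i = g
  · subst hig
    have step : ∀ j : Fin G, (∑ y, p y * ((if j = i then f y else 1) * (if j = i then h y else 1)))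
        = (if j = i then ∑ y, p y * (f y * h y) else 1) := by
      intro j; by_cases h1 : j = i <;> simp [h1, hp, mul_assoc]
    rw [Finset.prod_congr rfl (fun j _ => step j), Finset.prod_ite_eq']
    simp
  · have step : ∀ j : Fin G, (∑ y, p y * ((if j = i then f y else 1) * (if j = g then h y else 1)))
        = (if j = i then ∑ y, p y * f y else 1) * (if j = g then ∑ y, p y * h y else 1) := by
      intro j
      by_cases h1 : j = i <;> by_cases h2 : j = g <;> simp_all [hp]
    rw [Finset.prod_congr rfl (fun j _ => step j), Finset.prod_mul_distrib,
      Finset.prod_ite_eq', Finset.prod_ite_eq']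
    simp [hig]

/-- Expected contribution of the group-mean baseline in the GRPO estimator:
over `G` i.i.d. samples, the group-mean-baseline term equals the policy
gradient of the expected reward. -/
theorem group_mean_baseline_term
    {Y : Type*} [Fintype Y]
    {E : Type*} [NormedAddCommGroup E] [NormedSpace ℝ E]
    (π : E → Y → ℝ) (θ₀ : E)
    (hpos : ∀ θ y, 0 < π θ y)
    (hsum : ∀ θ, ∑ y, π θ y = 1)
    (hdiff : ∀ y, DifferentiableAt ℝ (fun θ => π θ y) θ₀)
    (r : Y → ℝ) (G : ℕ) (hG : 1 ≤ G) :
    ∑ s : Fin G → Y, (∏ i, π θ₀ (s i)) •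
        ∑ i, ((1 / (G : ℝ)) * ∑ g, r (s g)) •
          fderiv ℝ (fun θ => Real.log (π θ (s i))) θ₀
      = fderiv ℝ (fun θ => ∑ y, π θ y * r y) θ₀ := by
  have hlog : ∀ y, fderiv ℝ (fun θ => Real.log (π θ y)) θ₀
      = (π θ₀ y)⁻¹ • fderiv ℝ (fun θ => π θ y) θ₀ := fun y =>
    (((hdiff y).hasFDerivAt).log (ne_of_gt (hpos θ₀ y))).fderiv
  ext v
  set p : Y → ℝ := π θ₀ with hp
  set φ : Y → ℝ := fun y => fderiv ℝ (fun θ => π θ y) θ₀ v with hφ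
  have hφ0 : ∑ y, φ y = 0 := by
    have h1 : fderiv ℝ (fun θ => ∑ y, π θ y) θ₀ = 0 := by
      have : (fun θ => ∑ y, π θ y) = fun _ => (1:ℝ) := funext hsum
      rw [this]; exact fderiv_const_apply 1
    have h2 := fderiv_fun_sum (u := Finset.univ) (A := fun y θ => π θ y) (x := θ₀)
      (fun y _ => hdiff y)
    rw [h1] at h2
    have := congrArg (fun (L : E →L[ℝ] ℝ) => L v) h2.symm
    simpa [ContinuousLinearMap.sum_apply] using this
  have hRHS : fderiv ℝ (fun θ => ∑ y, π θ y * r y) θ₀ v = ∑ y, r y * φ y := by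
    rw [fderiv_fun_sum (fun y _ => (hdiff y).mul_const (r y))]
    rw [ContinuousLinearMap.sum_apply]
    refine Finset.sum_congr rfl fun y _ => ?_
    rw [fderiv_mul_const (hdiff y)]
    simp [hφ, mul_comm]
  rw [hRHS]
  set sc : Y → ℝ := fun y => (p y)⁻¹ * φ y with hsc
  have hpsc : ∀ y, p y * sc y = φ y := fun y => by
    rw [hsc, ← mul_assoc, mul_inv_cancel₀ (ne_of_gt (hpos θ₀ y)), one_mul]
  have hS0 : ∑ y, p y * sc y = 0 := by
    rw [Finset.sum_congr rfl fun y _ => hpsc y]; exact hφ0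
  have hT : ∑ y, p y * (sc y * r y) = ∑ y, r y * φ y := by
    refine Finset.sum_congr rfl fun y _ => ?_
    rw [← hpsc y]; ring
  have hLv : (∑ s : Fin G → Y, (∏ i, π θ₀ (s i)) •
        ∑ i, ((1 / (G : ℝ)) * ∑ g, r (s g)) •
          fderiv ℝ (fun θ => Real.log (π θ (s i))) θ₀) v
      = ∑ s : Fin G → Y, (∏ j, p (s j)) *
          ∑ i, ((1 / (G : ℝ) * ∑ g, r (s g)) * sc (s i)) := by
    rw [ContinuousLinearMap.sum_apply]
    refine Finset.sum_congr rfl fun s _ => ?_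
    simp only [ContinuousLinearMap.smul_apply, ContinuousLinearMap.sum_apply, hlog,
      smul_eq_mul, hsc, hφ, hp]
  rw [hLv]
  have expand : ∀ s : Fin G → Y, (∏ j, p (s j)) *
        ∑ i, ((1 / (G : ℝ) * ∑ g, r (s g)) * sc (s i))
      = ∑ i, ∑ g, (1 / (G : ℝ)) * ((∏ j, p (s j)) * (sc (s i) * r (s g))) := by
    intro s
    rw [Finset.mul_sum]
    refine Finset.sum_congr rfl fun i _ => ?_
    have h1 : ∀ g : Fin G, (1 / (G : ℝ)) * ((∏ j, p (s j)) * (sc (s i) * r (s g)))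
        = ((1 / (G : ℝ)) * (∏ j, p (s j)) * sc (s i)) * r (s g) := fun g => by ring
    rw [Finset.sum_congr rfl fun g _ => h1 g, ← Finset.mul_sum]
    ring
  rw [Finset.sum_congr rfl fun s _ => expand s]
  rw [Finset.sum_comm]
  have inner : ∀ i : Fin G, (∑ s : Fin G → Y, ∑ g, (1 / (G : ℝ)) *
        ((∏ j, p (s j)) * (sc (s i) * r (s g))))
      = ∑ g, (1 / (G : ℝ)) * (if i = g then ∑ y, r y * φ y else 0) := by
    intro i
    rw [Finset.sum_comm]
    refine Finset.sum_congr rfl fun g _ => ?_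
    rw [← Finset.mul_sum, key_pair p sc r i g, prod_eval p sc r (hsum θ₀) i g]
    by_cases hig : i = g <;> simp [hig, hS0, hT]
  rw [Finset.sum_congr rfl fun i _ => inner i]
  have hGne : (G : ℝ) ≠ 0 := by positivity
  simp [Finset.sum_ite_eq, Finset.mul_sum]
  field_simp
end

section
/- Let Y be a finite type, E a real normed vector space, and π : E → Y → ℝ a parameterized probability mass function with π θ y > 0 and ∑_{y ∈ Y} π θ y = 1 for every θ, such that each θ ↦ π θ y is differentiable at θ₀. Let r : Y → ℝ and let G ≥ 1. Then the expectation over G i.i.d. samples of the uncorrected group-centered score estimator equals (G−1) times the policy gradient: ∑_{s : Fin G → Y} (∏_{i} π θ₀ (s i)) • ∑_{i} (r (s i) − (1/G) ∑_{g} r (s g)) • D(θ ↦ log (π θ (s i)))(θ₀) = (G − 1) • D(θ ↦ ∑_{y ∈ Y} (π θ y) * (r y))(θ₀). -/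
lemma grpo_aux1 {Y : Type*} [Fintype Y] {G : ℕ} (p : Y → ℝ) (hp1 : ∑ y, p y = 1)
    (i : Fin G) (c : Y → ℝ) :
    ∑ s : Fin G → Y, (∏ j, p (s j)) * c (s i) = ∑ y, p y * c y := by
  have h : ∀ s : Fin G → Y, (∏ j, p (s j)) * c (s i)
      = ∏ j, (p (s j) * if i = j then c (s j) else 1) := by
    intro s
    rw [Finset.prod_mul_distrib, Finset.prod_ite_eq]
    simp
  simp_rw [h]
  rw [← Fintype.piFinset_univ, ← Finset.prod_univ_sum (fun _ => (Finset.univ : Finset Y)) (fun j y => p y * if i = j then c y else 1)]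
  rw [Finset.prod_eq_single i]
  · simp
  · intro j _ hj
    simp [(Ne.symm hj : ¬ i = j), hp1]
  · simp

lemma grpo_aux2 {Y : Type*} [Fintype Y] {G : ℕ} (p : Y → ℝ) (hp1 : ∑ y, p y = 1)
    (i g : Fin G) (hig : i ≠ g) (c d : Y → ℝ) :
    ∑ s : Fin G → Y, (∏ j, p (s j)) * (c (s i) * d (s g))
      = (∑ y, p y * c y) * (∑ y, p y * d y) := by
  have h : ∀ s : Fin G → Y, (∏ j, p (s j)) * (c (s i) * d (s g))
      = ∏ j, (p (s j) * ((if i = j then c (s j) else 1) * (if g = j then d (s j) else 1))) := by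
    intro s
    rw [Finset.prod_mul_distrib, Finset.prod_mul_distrib, Finset.prod_ite_eq,
      Finset.prod_ite_eq]
    simp [mul_assoc]
  simp_rw [h]
  rw [← Fintype.piFinset_univ, ← Finset.prod_univ_sum (fun _ => (Finset.univ : Finset Y))
    (fun j y => p y * ((if i = j then c y else 1) * (if g = j then d y else 1)))]
  have h2 : ∀ j : Fin G, (∑ y, p y * ((if i = j then c y else 1) * (if g = j then d y else 1)))
      = (if i = j then ∑ y, p y * c y else 1) * (if g = j then ∑ y, p y * d y else 1) := by
    intro j
    by_cases h1 : i = j <;> by_cases h2 : g = j <;>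
      simp_all [hp1, ← Finset.sum_mul, mul_comm]
  simp_rw [h2]
  rw [Finset.prod_mul_distrib, Finset.prod_ite_eq, Finset.prod_ite_eq]
  simp

lemma grpo_scalar {Y : Type*} [Fintype Y] {G : ℕ} (hG : 1 ≤ G)
    (p r q : Y → ℝ) (hp : ∀ y, p y ≠ 0) (hp1 : ∑ y, p y = 1) (hq : ∑ y, q y = 0) :
    ∑ s : Fin G → Y, (∏ j, p (s j)) *
        ∑ i, (r (s i) - (1 / (G : ℝ)) * ∑ g, r (s g)) * ((p (s i))⁻¹ * q (s i))
      = ((G : ℝ) - 1) * ∑ y, r y * q y := by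
  set c : Y → ℝ := fun y => (p y)⁻¹ * q y with hc_def
  have hrw : ∀ y, (p y)⁻¹ * q y = c y := fun y => rfl
  simp_rw [hrw]
  have hpc : ∀ y, p y * c y = q y := fun y => mul_inv_cancel_left₀ (hp y) (q y)
  have hprc : ∀ y, p y * (r y * c y) = r y * q y := by
    intro y; rw [show p y * (r y * c y) = r y * (p y * c y) by ring, hpc]
  have hpcr : ∀ y, p y * (c y * r y) = r y * q y := by
    intro y; rw [show p y * (c y * r y) = r y * (p y * c y) by ring, hpc]
  have step : ∀ s : Fin G → Y, (∏ j, p (s j)) *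
      (∑ i, (r (s i) - (1 / (G : ℝ)) * ∑ g, r (s g)) * c (s i))
      = ∑ i, (∏ j, p (s j)) * ((r (s i) - (1 / (G : ℝ)) * ∑ g, r (s g)) * c (s i)) :=
    fun s => Finset.mul_sum _ _ _
  simp_rw [step]
  rw [Finset.sum_comm]
  have key : ∀ i : Fin G,
      (∑ s : Fin G → Y, (∏ j, p (s j)) *
        ((r (s i) - (1 / (G : ℝ)) * ∑ g, r (s g)) * c (s i)))
      = (∑ y, r y * q y) - (1 / (G : ℝ)) * ∑ y, r y * q y := by
    intro i
    have expand : ∀ s : Fin G → Y, (∏ j, p (s j)) *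
        ((r (s i) - (1 / (G : ℝ)) * ∑ g, r (s g)) * c (s i))
        = (∏ j, p (s j)) * (r (s i) * c (s i))
          - ∑ g, (1 / (G : ℝ)) * ((∏ j, p (s j)) * (c (s i) * r (s g))) := by
      intro s
      rw [show (r (s i) - (1 / (G : ℝ)) * ∑ g, r (s g)) * c (s i)
            = r (s i) * c (s i) - ∑ g, (1 / (G : ℝ)) * (r (s g) * c (s i)) by
          rw [sub_mul, mul_assoc, Finset.sum_mul, Finset.mul_sum]]
      rw [mul_sub, Finset.mul_sum]
      congr 1
      exact Finset.sum_congr rfl fun g _ => by ring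
    simp_rw [expand]
    rw [Finset.sum_sub_distrib]
    congr 1
    · refine (grpo_aux1 p hp1 i (fun y => r y * c y)).trans ?_
      exact Finset.sum_congr rfl fun y _ => hprc y
    · rw [Finset.sum_comm]
      simp_rw [← Finset.mul_sum]
      congr 1
      rw [Finset.sum_eq_single i]
      · refine (grpo_aux1 p hp1 i (fun y => c y * r y)).trans ?_
        exact Finset.sum_congr rfl fun y _ => hpcr y
      · intro g _ hgi
        refine (grpo_aux2 p hp1 i g (Ne.symm hgi) c r).trans ?_
        have h0 : ∑ y, p y * c y = 0 := by simp_rw [hpc]; exact hq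
        rw [h0, zero_mul]
      · simp
  simp_rw [key]
  rw [Finset.sum_const, Finset.card_univ, Fintype.card_fin, nsmul_eq_mul]
  have hGne : (G : ℝ) ≠ 0 := by positivity
  field_simp


/-- The expectation over `G` i.i.d. samples of the uncorrected group-centered
score estimator equals `(G − 1)` times the policy gradient of the expected
reward. This explains the `G/(G−1)` correction factor in GRPO. -/
theorem uncorrected_group_centered_estimator
    {Y : Type*} [Fintype Y]
    {E : Type*} [NormedAddCommGroup E] [NormedSpace ℝ E]
    (π : E → Y → ℝ) (θ₀ : E)
    (hpos : ∀ θ y, 0 < π θ y)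
    (hsum : ∀ θ, ∑ y, π θ y = 1)
    (hdiff : ∀ y, DifferentiableAt ℝ (fun θ => π θ y) θ₀)
    (r : Y → ℝ) (G : ℕ) (hG : 1 ≤ G) :
    ∑ s : Fin G → Y, (∏ i, π θ₀ (s i)) •
        ∑ i, (r (s i) - (1 / (G : ℝ)) * ∑ g, r (s g)) •
          fderiv ℝ (fun θ => Real.log (π θ (s i))) θ₀
      = ((G : ℝ) - 1) • fderiv ℝ (fun θ => ∑ y, π θ y * r y) θ₀ := by
  have hlog : ∀ y : Y, fderiv ℝ (fun θ => Real.log (π θ y)) θ₀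
      = (π θ₀ y)⁻¹ • fderiv ℝ (fun θ => π θ y) θ₀ :=
    fun y => ((hdiff y).hasFDerivAt.log (hpos θ₀ y).ne').fderiv
  have hR : fderiv ℝ (fun θ => ∑ y, π θ y * r y) θ₀
      = ∑ y, r y • fderiv ℝ (fun θ => π θ y) θ₀ :=
    (HasFDerivAt.fun_sum fun y _ => ((hdiff y).hasFDerivAt.mul_const (r y))).fderiv
  have hzero : ∑ y, fderiv ℝ (fun θ => π θ y) θ₀ = 0 := by
    have h1 : HasFDerivAt (fun θ => ∑ y, π θ y)
        (∑ y, fderiv ℝ (fun θ => π θ y) θ₀) θ₀ :=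
      HasFDerivAt.fun_sum fun y _ => (hdiff y).hasFDerivAt
    have h2 : (fun θ : E => ∑ y, π θ y) = fun _ => (1 : ℝ) := funext hsum
    rw [h2] at h1
    exact h1.unique (hasFDerivAt_const 1 θ₀)
  simp_rw [hlog, hR]
  ext v
  simp only [ContinuousLinearMap.coe_sum', Finset.sum_apply, ContinuousLinearMap.coe_smul',
    Pi.smul_apply, smul_eq_mul]
  have hq : ∑ y, (fderiv ℝ (fun θ => π θ y) θ₀) v = 0 := by
    rw [← ContinuousLinearMap.sum_apply, hzero]
    rfl
  have := grpo_scalar hG (fun y => π θ₀ y) r (fun y => (fderiv ℝ (fun θ => π θ y) θ₀) v)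
    (fun y => (hpos θ₀ y).ne') (hsum θ₀) hq
  convert this using 2
end
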